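/- Let r ≥ 0 and let X be a finite quasimetric space. Then X has an r-deformation retract M ⊆ X which is r-minimal; in fact, any r-deformation retract of X of minimal possible cardinality is r-minimal. In particular, every finite quasimetric space has an r-minimal model, which can moreover be chosen to be an r-deformation retract of X. -/

import Mathlib

open scoped ENNReal

class QuasiMetric (X : Type*) where
  qdist : X → X → ℝ≥0∞
  qdist_triangle : ∀ x y z : X, qdist x z ≤ qdist x y + qdist y z
  qdist_eq_zero_iff : ∀ x y : X, qdist x y = 0 ↔ x = y

open QuasiMetric

instance {X : Type*} [QuasiMetric X] (A : Set X) : QuasiMetric A where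
  qdist a b := qdist a.1 b.1
  qdist_triangle a b c := qdist_triangle a.1 b.1 c.1
  qdist_eq_zero_iff a b := (qdist_eq_zero_iff a.1 b.1).trans Subtype.coe_inj

/-- A map of quasimetric spaces is short (1-Lipschitz). -/
def IsShort {X Y : Type*} [QuasiMetric X] [QuasiMetric Y] (f : X → Y) : Prop :=
  ∀ x x' : X, qdist (f x) (f x') ≤ qdist x x'

/-- The distance `d(f,g) = sup_x d(f x, g x)` on maps. -/
noncomputable def mapDist {X Y : Type*} [QuasiMetric X] [QuasiMetric Y] (f g : X → Y) : ℝ≥0∞ :=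
  ⨆ x : X, qdist (f x) (g x)

/-- Two short maps are `r`-homotopic if they are connected by a chain of short maps
in which each consecutive pair is at distance `≤ r` in one direction or the other. -/
def MapHomotopic {X Y : Type*} [QuasiMetric X] [QuasiMetric Y] (r : ℝ) (f g : X → Y) : Prop :=
  Relation.ReflTransGen
    (fun u v : X → Y => IsShort u ∧ IsShort v ∧
      (mapDist u v ≤ ENNReal.ofReal r ∨ mapDist v u ≤ ENNReal.ofReal r)) f g

/-- `A ⊆ X` is an `r`-deformation retract of `X`. -/
def IsDefRetract {X : Type*} [QuasiMetric X] (r : ℝ) (A : Set X) : Prop :=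
  ∃ ρ : X → A, IsShort ρ ∧ (∀ a : A, ρ (a : X) = a) ∧
    MapHomotopic r (fun x => (ρ x : X)) id

/-- A quasimetric space is `r`-minimal if it has no proper `r`-deformation retract. -/
def RMinimal (r : ℝ) (X : Type*) [QuasiMetric X] : Prop :=
  ∀ A : Set X, IsDefRetract r A → A = Set.univ

/-- A distance-preserving bijection. -/
def IsIsometry {X Y : Type*} [QuasiMetric X] [QuasiMetric Y] (f : X → Y) : Prop :=
  Function.Bijective f ∧ ∀ x x' : X, qdist (f x) (f x') = qdist x x'

/-- Two quasimetric spaces are `r`-homotopy equivalent. -/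
def RHomotopyEquivalent (r : ℝ) (X Y : Type*) [QuasiMetric X] [QuasiMetric Y] : Prop :=
  ∃ f : X → Y, ∃ g : Y → X, IsShort f ∧ IsShort g ∧
    MapHomotopic r (g ∘ f) id ∧ MapHomotopic r (f ∘ g) id

/-!
A deformation retract of a deformation retract is again a deformation retract, because
`r`-homotopies can be whiskered by short maps. Hence a proper retract of a retract `A` of
minimal cardinality would be a smaller retract of `X`, so `A` is `r`-minimal; and since `X`
is finite and is a retract of itself, a retract of minimal cardinality exists.
-/

section Homotopy

variable {X Y A B : Type*} [QuasiMetric X] [QuasiMetric Y] [QuasiMetric A] [QuasiMetric B]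

lemma IsShort.comp {g : A → Y} {f : X → A} (hg : IsShort g) (hf : IsShort f) :
    IsShort (g ∘ f) :=
  fun _ _ => (hg _ _).trans (hf _ _)

lemma isShort_subtype_val (S : Set X) : IsShort (Subtype.val : S → X) :=
  fun _ _ => le_rfl

lemma mapDist_whisker_le {ι : B → Y} (hι : IsShort ι) (ρ : X → A) (u v : A → B) :
    mapDist (ι ∘ u ∘ ρ) (ι ∘ v ∘ ρ) ≤ mapDist u v :=
  iSup_le fun x => (hι _ _).trans (le_iSup (fun a => qdist (u a) (v a)) (ρ x))

lemma MapHomotopic.whisker {r : ℝ} {u v : A → B} (h : MapHomotopic r u v)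
    {ρ : X → A} (hρ : IsShort ρ) {ι : B → Y} (hι : IsShort ι) :
    MapHomotopic r (ι ∘ u ∘ ρ) (ι ∘ v ∘ ρ) := by
  refine Relation.ReflTransGen.lift (fun w => ι ∘ w ∘ ρ) ?_ _ _ h
  rintro a b ⟨ha, hb, hab⟩
  refine ⟨hι.comp (ha.comp hρ), hι.comp (hb.comp hρ), ?_⟩
  exact hab.imp (mapDist_whisker_le hι ρ a b).trans (mapDist_whisker_le hι ρ b a).trans

end Homotopy

namespace IsDefRetract

variable {X : Type*} [QuasiMetric X] {r : ℝ}

lemma univ (r : ℝ) : IsDefRetract r (Set.univ : Set X) :=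
  ⟨fun x => ⟨x, Set.mem_univ x⟩, fun _ _ => le_rfl, fun _ => rfl, Relation.ReflTransGen.refl⟩

lemma trans {A : Set X} (hA : IsDefRetract r A) {B : Set A} (hB : IsDefRetract r B) :
    IsDefRetract r (Subtype.val '' B) := by
  obtain ⟨ρ, hρ, hρ_fix, hρ_hom⟩ := hA
  obtain ⟨σ, hσ, hσ_fix, hσ_hom⟩ := hB
  refine ⟨fun x => ⟨σ (ρ x), Set.mem_image_of_mem _ (σ (ρ x)).2⟩, fun _ _ =>
    (hσ _ _).trans (hρ _ _), ?_, ?_⟩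
  · rintro ⟨_, b, hb, rfl⟩
    apply Subtype.ext
    change ((σ (ρ b) : A) : X) = b
    rw [hρ_fix b, hσ_fix ⟨b, hb⟩]
  · exact (hσ_hom.whisker hρ (isShort_subtype_val A)).trans hρ_hom

lemma rHomotopyEquivalent {A : Set X} (hA : IsDefRetract r A) : RHomotopyEquivalent r A X := by
  obtain ⟨ρ, hρ, hρ_fix, hρ_hom⟩ := hA
  have hρι : ρ ∘ Subtype.val = id := funext hρ_fix
  exact ⟨Subtype.val, ρ, isShort_subtype_val A, hρ, hρι ▸ Relation.ReflTransGen.refl, hρ_hom⟩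

lemma rMinimal_of_card_le [Finite X] {A : Set X} (hA : IsDefRetract r A)
    (hA_min : ∀ B : Set X, IsDefRetract r B → Nat.card A ≤ Nat.card B) : RMinimal r A := by
  intro B hB
  have hcard : Nat.card A ≤ Nat.card B := by
    simpa only [Nat.card_image_of_injective Subtype.val_injective] using hA_min _ (hA.trans hB)
  refine Set.eq_of_subset_of_ncard_le B.subset_univ ?_
  rwa [Set.ncard_univ, ← Nat.card_coe_set_eq]

lemma exists_card_le [Finite X] (r : ℝ) :
    ∃ A : Set X, IsDefRetract r A ∧ ∀ B : Set X, IsDefRetract r B → Nat.card A ≤ Nat.card B :=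
  Set.exists_min_image {A : Set X | IsDefRetract r A} (fun A => Nat.card A) (Set.toFinite _)
    ⟨Set.univ, univ r⟩

end IsDefRetract

theorem stmt_5_general {X : Type*} [QuasiMetric X] [Finite X] (r : ℝ) :
    (∀ A : Set X, IsDefRetract r A →
        (∀ B : Set X, IsDefRetract r B → Nat.card A ≤ Nat.card B) → RMinimal r A) ∧
    ∃ M : Set X, IsDefRetract r M ∧ RMinimal r M ∧ RHomotopyEquivalent r M X := by
  refine ⟨fun A hA hA_min => hA.rMinimal_of_card_le hA_min, ?_⟩
  obtain ⟨M, hM, hM_min⟩ := IsDefRetract.exists_card_le (X := X) r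
  exact ⟨M, hM, hM.rMinimal_of_card_le hM_min, hM.rHomotopyEquivalent⟩

theorem stmt_5 {X : Type*} [QuasiMetric X] [Finite X] (r : ℝ) (hr : 0 ≤ r) :
    (∀ A : Set X, IsDefRetract r A →
        (∀ B : Set X, IsDefRetract r B → Nat.card A ≤ Nat.card B) → RMinimal r A) ∧
    ∃ M : Set X, IsDefRetract r M ∧ RMinimal r M ∧ RHomotopyEquivalent r M X :=
  stmt_5_general r
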